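/- For every t ≥ 1, every finite vertex set U with |U| = u ≥ t, and every nonnegative integer σ divisible by t with σ/u ≤ C(u−1, t−1), there exists a simple t-uniform hypergraph on U whose degree sum is σ and whose degrees are almost regular (all equal to ⌊σ/u⌋ or ⌈σ/u⌉). -/

import Mathlib

/-- Degree of a vertex in a hypergraph given as a finite set of edges. -/
def hdeg {V : Type*} [DecidableEq V] (H : Finset (Finset V)) (v : V) : ℕ :=
  (H.filter (fun e => v ∈ e)).card

lemma hdeg_insert {V : Type*} [DecidableEq V] {H : Finset (Finset V)} {f : Finset V}
    (hf : f ∉ H) (v : V) :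
    hdeg (insert f H) v = hdeg H v + (if v ∈ f then 1 else 0) := by
  unfold hdeg
  rw [Finset.filter_insert]
  split
  · rw [Finset.card_insert_of_notMem (fun h => hf (Finset.mem_filter.1 h).1)]
  · simp

lemma hdeg_erase {V : Type*} [DecidableEq V] {H : Finset (Finset V)} {e : Finset V}
    (he : e ∈ H) (v : V) :
    hdeg (H.erase e) v + (if v ∈ e then 1 else 0) = hdeg H v := by
  unfold hdeg
  rw [Finset.filter_erase]
  split
  · rename_i hv
    rw [Finset.card_erase_add_one (Finset.mem_filter.2 ⟨he, hv⟩)]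
  · rename_i hv
    rw [Finset.erase_eq_of_notMem (a := e) (fun h => hv (Finset.mem_filter.1 h).2), add_zero]
lemma swap_exists {V : Type*} [DecidableEq V] {H : Finset (Finset V)} {x y : V}
    (hxy : hdeg H y + 1 < hdeg H x) :
    ∃ e ∈ H, x ∈ e ∧ y ∉ e ∧ insert y (e.erase x) ∉ H := by
  have hne : x ≠ y := by rintro rfl; omega
  by_contra hc
  push_neg at hc
  set P := H.filter (fun e => x ∈ e ∧ y ∉ e) with hP
  set Q := H.filter (fun e => y ∈ e ∧ x ∉ e) with hQ
  have hPQ : P.card ≤ Q.card := by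
    apply Finset.card_le_card_of_injOn (fun e => insert y (e.erase x))
    · intro e he
      rw [hP, Finset.mem_coe, Finset.mem_filter] at he
      obtain ⟨heH, hxe, hye⟩ := he
      rw [hQ, Finset.mem_coe, Finset.mem_filter]
      refine ⟨hc e heH hxe hye, Finset.mem_insert_self _ _, ?_⟩
      simp [hne, Finset.mem_erase]
    · intro e1 h1 e2 h2 heq
      rw [hP, Finset.coe_filter] at h1 h2
      obtain ⟨h1H, h1x, h1y⟩ := h1
      obtain ⟨h2H, h2x, h2y⟩ := h2
      ext a
      by_cases hax : a = x
      · subst hax; simp [h1x, h2x]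
      · by_cases hay : a = y
        · subst hay; simp [h1y, h2y]
        · have := congrArg (a ∈ ·) heq
          simpa [Finset.mem_insert, Finset.mem_erase, hay, hax] using this
  have hx : hdeg H x = (H.filter (fun e => x ∈ e ∧ y ∈ e)).card + P.card := by
    unfold hdeg
    rw [← Finset.card_filter_add_card_filter_not (s := H.filter (fun e => x ∈ e)) (p := fun e => y ∈ e), Finset.filter_filter, Finset.filter_filter]
  have hy : hdeg H y = (H.filter (fun e => y ∈ e ∧ x ∈ e)).card + Q.card := by
    unfold hdeg
    rw [← Finset.card_filter_add_card_filter_not (s := H.filter (fun e => y ∈ e)) (p := fun e => x ∈ e), Finset.filter_filter, Finset.filter_filter]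
  have hcomm : H.filter (fun e => y ∈ e ∧ x ∈ e) = H.filter (fun e => x ∈ e ∧ y ∈ e) := by
    ext e; simp [and_comm]
  rw [hcomm] at hy
  omega

/-- One balancing step. -/
lemma swap_step {u t : ℕ} {H : Finset (Finset (Fin u))} {x y : Fin u}
    (hxy : hdeg H y + 1 < hdeg H x) (hcards : ∀ e ∈ H, e.card = t) :
    ∃ H' : Finset (Finset (Fin u)),
      (∀ e ∈ H', e.card = t) ∧ H'.card = H.card ∧
      (∑ v : Fin u, (hdeg H' v)^2) < (∑ v : Fin u, (hdeg H v)^2) := by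
  have hne : x ≠ y := by rintro rfl; omega
  obtain ⟨e, heH, hxe, hye, hfH⟩ := swap_exists hxy
  set f : Finset (Fin u) := insert y (e.erase x) with hf
  have hfe : f ≠ e := by
    intro h
    exact hye (h ▸ Finset.mem_insert_self y _)
  have hyex : y ∉ e.erase x := fun h => hye (Finset.mem_of_mem_erase h)
  have hcf : f.card = t := by
    rw [hf, Finset.card_insert_of_notMem hyex, Finset.card_erase_of_mem hxe, hcards e heH]
    have : 1 ≤ t := by
      rw [← hcards e heH]
      exact Finset.card_pos.2 ⟨x, hxe⟩
    omega
  have hfne : f ∉ H.erase e := fun h => hfH (Finset.mem_of_mem_erase h)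
  refine ⟨insert f (H.erase e), ?_, ?_, ?_⟩
  · intro e' he'
    rcases Finset.mem_insert.1 he' with h | h
    · exact h ▸ hcf
    · exact hcards e' (Finset.mem_of_mem_erase h)
  · rw [Finset.card_insert_of_notMem hfne, Finset.card_erase_of_mem heH]
    have : 1 ≤ H.card := Finset.card_pos.2 ⟨e, heH⟩
    omega
  · -- degree computation
    set H' := insert f (H.erase e) with hH'
    have hdeg' : ∀ v, hdeg H' v + (if v ∈ e then 1 else 0)
        = hdeg H v + (if v ∈ f then 1 else 0) := by
      intro v
      rw [hH', hdeg_insert hfne, ← hdeg_erase heH v]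
      ring
    have hxf : x ∉ f := by
      rw [hf]
      simp [hne, Finset.mem_erase]
    have hyf : y ∈ f := Finset.mem_insert_self _ _
    have hdx : hdeg H' x + 1 = hdeg H x := by
      have := hdeg' x
      simpa [hxe, hxf] using this
    have hdy : hdeg H' y = hdeg H y + 1 := by
      have := hdeg' y
      simpa [hye, hyf] using this
    have hdv : ∀ v, v ≠ x → v ≠ y → hdeg H' v = hdeg H v := by
      intro v hvx hvy
      have hvf : v ∈ f ↔ v ∈ e := by
        rw [hf]
        simp [Finset.mem_insert, Finset.mem_erase, hvx, hvy]
      have := hdeg' v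
      by_cases hv : v ∈ e
      · simpa [hv, hvf] using this
      · simpa [hv, hvf] using this
    -- split sums
    have hsplit : ∀ g : Fin u → ℕ,
        ∑ v : Fin u, g v = (∑ v ∈ ({x, y} : Finset (Fin u))ᶜ, g v) + (g x + g y) := by
      intro g
      rw [← Finset.sum_compl_add_sum ({x, y} : Finset (Fin u)) g, Finset.sum_pair hne]
    have hcompl : ∑ v ∈ ({x, y} : Finset (Fin u))ᶜ, (hdeg H' v)^2
        = ∑ v ∈ ({x, y} : Finset (Fin u))ᶜ, (hdeg H v)^2 := by
      apply Finset.sum_congr rfl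
      intro v hv
      rw [Finset.mem_compl, Finset.mem_insert, Finset.mem_singleton] at hv
      push_neg at hv
      rw [hdv v hv.1 hv.2]
    rw [hsplit (fun v => (hdeg H' v)^2), hsplit (fun v => (hdeg H v)^2), hcompl]
    have h1 : (hdeg H' x)^2 + (hdeg H' y)^2 < (hdeg H x)^2 + (hdeg H y)^2 := by
      nlinarith [hdx, hdy, hxy]
    omega

/-- Balancing by induction on the potential. -/
lemma exists_balanced {u t : ℕ} : ∀ (n : ℕ) (H : Finset (Finset (Fin u))),
    (∑ v : Fin u, (hdeg H v)^2) ≤ n → (∀ e ∈ H, e.card = t) →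
    ∃ H' : Finset (Finset (Fin u)),
      (∀ e ∈ H', e.card = t) ∧ H'.card = H.card ∧
      (∀ x y : Fin u, hdeg H' x ≤ hdeg H' y + 1) := by
  intro n
  induction n with
  | zero =>
    intro H hpot hcards
    by_cases hb : ∀ x y : Fin u, hdeg H x ≤ hdeg H y + 1
    · exact ⟨H, hcards, rfl, hb⟩
    · push_neg at hb
      obtain ⟨x, y, hxy⟩ := hb
      obtain ⟨H', _, _, hlt⟩ := swap_step hxy hcards
      omega
  | succ n ih =>
    intro H hpot hcards
    by_cases hb : ∀ x y : Fin u, hdeg H x ≤ hdeg H y + 1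
    · exact ⟨H, hcards, rfl, hb⟩
    · push_neg at hb
      obtain ⟨x, y, hxy⟩ := hb
      obtain ⟨H', hc', hcard', hlt⟩ := swap_step hxy hcards
      obtain ⟨H'', h1, h2, h3⟩ := ih H' (by omega) hc'
      exact ⟨H'', h1, hcard' ▸ h2, h3⟩

lemma hdeg_sum {u : ℕ} (H : Finset (Finset (Fin u))) :
    ∑ v : Fin u, hdeg H v = ∑ e ∈ H, e.card := by
  unfold hdeg
  simp_rw [Finset.card_filter]
  rw [Finset.sum_comm]
  apply Finset.sum_congr rfl
  intro e _
  simp [Finset.card_filter]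

/-- For every `t ≥ 1`, vertex set of size `u ≥ t`, and degree sum `σ` divisible by `t`
with `σ ≤ u·C(u−1, t−1)`, there is a simple `t`-uniform hypergraph with degree sum `σ`
whose degrees are almost regular (each equal to `⌊σ/u⌋` or `⌈σ/u⌉`). -/
theorem exists_almost_regular_hypergraph (t u σ : ℕ) (ht : 1 ≤ t) (htu : t ≤ u)
    (hdvd : t ∣ σ) (hσ : σ ≤ u * (u - 1).choose (t - 1)) :
    ∃ H : Finset (Finset (Fin u)),
      (∀ e ∈ H, e.card = t) ∧
      (∑ v : Fin u, hdeg H v = σ) ∧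
      (∀ v : Fin u, hdeg H v = σ / u ∨ hdeg H v = (σ + u - 1) / u) := by
  have hu : 1 ≤ u := le_trans ht htu
  obtain ⟨m, hm⟩ := hdvd
  have hid : u * (u - 1).choose (t - 1) = u.choose t * t := by
    have h := Nat.add_one_mul_choose_eq (u - 1) (t - 1)
    rw [Nat.sub_add_cancel hu,
      Nat.sub_add_cancel ht] at h
    exact h
  have hmle : m ≤ u.choose t := by
    have h1 : t * m ≤ t * u.choose t := by
      rw [← hm, mul_comm t]
      omega
    exact Nat.le_of_mul_le_mul_left h1 ht
  obtain ⟨H0, hH0sub, hH0card⟩ := Finset.exists_subset_card_eq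
    (s := Finset.powersetCard t (Finset.univ : Finset (Fin u))) (n := m)
    (by rw [Finset.card_powersetCard, Finset.card_univ, Fintype.card_fin]; exact hmle)
  have hcards0 : ∀ e ∈ H0, e.card = t := fun e he =>
    (Finset.mem_powersetCard.1 (hH0sub he)).2
  obtain ⟨H, hcards, hcard, hbal⟩ :=
    exists_balanced (∑ v : Fin u, (hdeg H0 v)^2) H0 le_rfl hcards0
  have hsum : ∑ v : Fin u, hdeg H v = σ := by
    rw [hdeg_sum, Finset.sum_congr rfl hcards, Finset.sum_const, smul_eq_mul,
      hcard, hH0card, hm, mul_comm]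
  refine ⟨H, hcards, hsum, ?_⟩
  have hne : (Finset.univ : Finset (Fin u)).Nonempty := ⟨⟨0, hu⟩, Finset.mem_univ _⟩
  obtain ⟨v0, _, hv0⟩ := Finset.exists_min_image Finset.univ (hdeg H) hne
  set k := hdeg H v0 with hk
  have hdegk : ∀ v, hdeg H v = k ∨ hdeg H v = k + 1 := by
    intro v
    have h1 := hv0 v (Finset.mem_univ v)
    have h2 := hbal v v0
    omega
  set p : Fin u → Prop := fun v => hdeg H v = k + 1 with hp
  set c := (Finset.univ.filter p).card with hc
  set d := (Finset.univ.filter (fun v => ¬ p v)).card with hd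
  have hdc : c + d = u := by
    rw [hc, hd, Finset.card_filter_add_card_filter_not, Finset.card_univ,
      Fintype.card_fin]
  have h1 : ∑ v ∈ Finset.univ.filter p, hdeg H v = c * (k + 1) := by
    rw [Finset.sum_congr rfl (fun v hv => (Finset.mem_filter.1 hv).2),
      Finset.sum_const, smul_eq_mul]
  have h2 : ∑ v ∈ Finset.univ.filter (fun v => ¬ p v), hdeg H v = d * k := by
    rw [Finset.sum_congr rfl (fun v hv => ?_), Finset.sum_const, smul_eq_mul]
    have := (Finset.mem_filter.1 hv).2
    rcases hdegk v with h | h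
    · exact h
    · exact absurd h this
  have hσ2 : σ = c * (k + 1) + d * k := by
    rw [← hsum, ← Finset.sum_filter_add_sum_filter_not Finset.univ p (hdeg H), h1, h2]
  have hcsum : σ = u * k + c := by
    rw [hσ2, ← hdc]; ring
  have hd1 : 1 ≤ d := by
    rw [hd]
    apply Finset.card_pos.2
    exact ⟨v0, Finset.mem_filter.2 ⟨Finset.mem_univ _, by rw [hp]; omega⟩⟩
  have hcu : c < u := by omega
  intro v
  rcases hdegk v with h | h
  · left
    rw [h, hcsum, Nat.mul_add_div (by omega), Nat.div_eq_of_lt hcu, add_zero]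
  · right
    have hc1 : 1 ≤ c := by
      rw [hc]
      apply Finset.card_pos.2
      exact ⟨v, Finset.mem_filter.2 ⟨Finset.mem_univ _, h⟩⟩
    have hmul : u * (k + 1) = u * k + u := by ring
    have heq : σ + u - 1 = u * (k + 1) + (c - 1) := by omega
    rw [h, heq, Nat.mul_add_div (by omega), Nat.div_eq_of_lt (by omega), add_zero]
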